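/- arXiv:1912.00924 — 3 statements merged into one kernel-verified Lean document; each statement's English description precedes it below -/
import Mathlib

section
/- Let G be a second countable Hausdorff locally compact abelian group with character group H, and let μ be a probability measure on ℝ × G such that for every c ∈ ℝ the function (t,g) ↦ exp(c·t) is μ-integrable. For h ∈ H define F_h(s) = ∫ exp(i s t)·h(g) dμ(t,g) for s ∈ ℂ (the integral converges absolutely for every s ∈ ℂ). Then: (a) for every h ∈ H, F_h is an entire function of s; (b) F_h(s) coincides with the characteristic function μ̂(s,h) for real s; and (c) for every r ≥ 0 and every h ∈ H, max_{|s| ≤ r} |F_h(s)| ≤ max_{|s| ≤ r} |F_0(s)|, where F_0 corresponds to the trivial character h = 0 of G. -/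
open MeasureTheory Complex

noncomputable section

/-- The Pontryagin dual of an additive topological abelian group `G`:
continuous characters `G → Circle`, written multiplicatively via `Multiplicative G`. -/
abbrev DualGroup (G : Type*) [AddCommGroup G] [TopologicalSpace G] : Type _ :=
  PontryaginDual (Multiplicative G)

/-- The analytic continuation `F_h(s) = ∫ exp(i s t)·h(g) dμ(t,g)` of the characteristic
function of a measure `μ` on `ℝ × G`, for a character `h` of `G` and complex `s`. -/
def Fext {G : Type*} [AddCommGroup G] [TopologicalSpace G] [MeasurableSpace G]
    (μ : Measure (ℝ × G)) (h : DualGroup G) (s : ℂ) : ℂ :=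
  ∫ p, Complex.exp (Complex.I * s * p.1) * (h (Multiplicative.ofAdd p.2) : ℂ) ∂μ

/-- The characteristic function of a measure `μ` on `ℝ × G` at the character `(s, h)`. -/
def charFunRG {G : Type*} [AddCommGroup G] [TopologicalSpace G] [MeasurableSpace G]
    (μ : Measure (ℝ × G)) (s : ℝ) (h : DualGroup G) : ℂ :=
  ∫ p, Complex.exp (Complex.I * s * p.1) * (h (Multiplicative.ofAdd p.2) : ℂ) ∂μ

/-! With `X = Prod.fst` and the unimodular weight `φ = h ∘ Prod.snd` we have
`F_h(s) = ∫ exp((i s) X) φ dμ`. Exponential moments of every order dominate this integrand and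
its `s`-derivative locally uniformly, so `F_h` is entire. Since `|φ| = 1`,
`|F_h(s)| ≤ ∫ exp(-Im s · X) dμ = F_0(i Im s)`, and `i Im s` lies in every closed disc around `0`
that contains `s`. -/

open ProbabilityTheory

section WeightedComplexMGF

variable {Ω : Type*} {m : MeasurableSpace Ω} {μ : Measure Ω} {X : Ω → ℝ} {φ : Ω → ℂ} {z : ℂ}

theorem hasDerivAt_integral_cexp_mul_mul (hz : z.re ∈ interior (integrableExpSet X μ))
    (hφ : AEStronglyMeasurable φ μ) (hφ_le : ∀ᵐ ω ∂μ, ‖φ ω‖ ≤ 1) :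
    HasDerivAt (fun w ↦ ∫ ω, cexp (w * X ω) * φ ω ∂μ)
      (∫ ω, X ω * cexp (z * X ω) * φ ω ∂μ) z := by
  have hX : AEMeasurable X μ := aemeasurable_of_mem_interior_integrableExpSet hz
  obtain ⟨ε, hε, hball⟩ := Metric.isOpen_iff.mp isOpen_interior z.re hz
  have hexp : ∀ t, |t| < ε → Integrable (fun ω ↦ Real.exp ((z.re + t) * X ω)) μ := fun t ht ↦
    interior_subset (s := integrableExpSet X μ)
      (hball (a := z.re + t) (by simpa [Real.dist_eq] using ht))
  refine (hasDerivAt_integral_of_dominated_loc_of_deriv_le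
    (F := fun w ω ↦ cexp (w * X ω) * φ ω) (F' := fun w ω ↦ X ω * cexp (w * X ω) * φ ω)
    (bound := fun ω ↦ |X ω| ^ 1 * Real.exp (z.re * X ω + ε / 4 * |X ω|))
    (Metric.ball_mem_nhds z (by positivity : 0 < ε / 4)) ?_ ?_ ?_ ?_ ?_ ?_).2
  · exact .of_forall fun w ↦ by fun_prop
  · exact (integrable_cexp_mul_of_re_mem_interior_integrableExpSet hz).mul_bdd hφ hφ_le
  · fun_prop
  · filter_upwards [hφ_le] with ω hω w hw
    have hre : w.re * X ω ≤ z.re * X ω + ε / 4 * |X ω| := by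
      have : |w.re - z.re| ≤ ε / 4 := (abs_re_le_norm (w - z)).trans (mem_ball_iff_norm.mp hw).le
      calc w.re * X ω = z.re * X ω + (w.re - z.re) * X ω := by ring
        _ ≤ z.re * X ω + |w.re - z.re| * |X ω| := by
          linarith [le_abs_self ((w.re - z.re) * X ω), abs_mul (w.re - z.re) (X ω)]
        _ ≤ z.re * X ω + ε / 4 * |X ω| := by gcongr
    calc ‖X ω * cexp (w * X ω) * φ ω‖ = |X ω| * Real.exp (w.re * X ω) * ‖φ ω‖ := by
          simp [Complex.norm_exp]
      _ ≤ |X ω| * Real.exp (z.re * X ω + ε / 4 * |X ω|) * 1 := by gcongr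
      _ = |X ω| ^ 1 * Real.exp (z.re * X ω + ε / 4 * |X ω|) := by ring
  · have h := hexp (ε / 2) (by rw [abs_of_pos (half_pos hε)]; linarith)
    have h' := hexp (-(ε / 2)) (by rw [abs_neg, abs_of_pos (half_pos hε)]; linarith)
    rw [← sub_eq_add_neg] at h'
    exact integrable_pow_abs_mul_exp_add_of_integrable_exp_mul h h' (by positivity)
      (by rw [abs_of_pos (half_pos hε)]; linarith) 1
  · filter_upwards with ω w _
    exact (((hasDerivAt_id' w).mul_const (X ω : ℂ)).cexp.mul_const (φ ω)).congr_deriv (by ring)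

theorem norm_integral_cexp_mul_mul_le_mgf (hz : z.re ∈ integrableExpSet X μ)
    (hφ_le : ∀ᵐ ω ∂μ, ‖φ ω‖ ≤ 1) :
    ‖∫ ω, cexp (z * X ω) * φ ω ∂μ‖ ≤ mgf X μ z.re := by
  refine (norm_integral_le_integral_norm _).trans
    (integral_mono_of_nonneg (.of_forall fun _ ↦ norm_nonneg _) hz ?_)
  filter_upwards [hφ_le] with ω hω
  calc ‖cexp (z * X ω) * φ ω‖ = Real.exp (z.re * X ω) * ‖φ ω‖ := by simp [Complex.norm_exp]
    _ ≤ Real.exp (z.re * X ω) := mul_le_of_le_one_right (Real.exp_pos _).le hω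

end WeightedComplexMGF

theorem csSup_image_le_csSup_image {α β : Type*} [ConditionallyCompleteLattice β]
    {f g : α → β} {K : Set α} (hK : K.Nonempty) (hg : BddAbove (g '' K))
    (h : ∀ s ∈ K, ∃ s' ∈ K, f s ≤ g s') : sSup (f '' K) ≤ sSup (g '' K) := by
  refine csSup_le (hK.image f) ?_
  rintro _ ⟨s, hs, rfl⟩
  obtain ⟨s', hs', hle⟩ := h s hs
  exact hle.trans (le_csSup hg (Set.mem_image_of_mem g hs'))

section CharacterIntegral

variable {G : Type*} [AddCommGroup G] [TopologicalSpace G] [MeasurableSpace G]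
  {μ : Measure (ℝ × G)}

theorem aestronglyMeasurable_character_snd [BorelSpace G] (h : DualGroup G) :
    AEStronglyMeasurable (fun p : ℝ × G ↦ (h (Multiplicative.ofAdd p.2) : ℂ)) μ :=
  (continuous_subtype_val.comp ((map_continuous h).comp continuous_ofAdd)).measurable.comp
    measurable_snd |>.aestronglyMeasurable

theorem differentiable_Fext [BorelSpace G]
    (hint : ∀ c : ℝ, Integrable (fun p : ℝ × G ↦ Real.exp (c * p.1)) μ) (h : DualGroup G) :
    Differentiable ℂ (Fext μ h) := fun s ↦
  have hz : (I * s).re ∈ interior (integrableExpSet Prod.fst μ) := by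
    simp [show integrableExpSet Prod.fst μ = Set.univ from Set.eq_univ_of_forall hint]
  ((hasDerivAt_integral_cexp_mul_mul hz (aestronglyMeasurable_character_snd h)
    (.of_forall fun _ ↦ (Circle.norm_coe _).le)).comp s
    ((hasDerivAt_id s).const_mul I)).differentiableAt

theorem Fext_one_ofReal_mul_I (y : ℝ) : Fext μ 1 (y * I) = mgf Prod.fst μ (-y) := by
  rw [← complexMGF_ofReal]
  simp only [Fext, complexMGF]
  congr with p
  rw [PontryaginDual.one_apply, Circle.coe_one, mul_one]
  congr 1
  push_cast
  linear_combination (y * p.1 : ℂ) * I_sq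

theorem norm_Fext_le_norm_Fext_one_im_mul_I
    (hint : ∀ c : ℝ, Integrable (fun p : ℝ × G ↦ Real.exp (c * p.1)) μ) (h : DualGroup G)
    (s : ℂ) : ‖Fext μ h s‖ ≤ ‖Fext μ 1 (s.im * I)‖ := by
  rw [Fext_one_ofReal_mul_I, Complex.norm_of_nonneg mgf_nonneg]
  calc ‖Fext μ h s‖ ≤ mgf Prod.fst μ (I * s).re :=
        norm_integral_cexp_mul_mul_le_mgf (hint _) (.of_forall fun _ ↦ (Circle.norm_coe _).le)
    _ = mgf Prod.fst μ (-s.im) := by simp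

end CharacterIntegral

theorem entire_extension_of_charFun_and_max_modulus_bound_general
    {G : Type*} [AddCommGroup G] [TopologicalSpace G]
    [MeasurableSpace G] [BorelSpace G]
    (μ : Measure (ℝ × G))
    (hint : ∀ c : ℝ, Integrable (fun p : ℝ × G => Real.exp (c * p.1)) μ) :
    -- (a) each `F_h` is an entire function
    (∀ h : DualGroup G, Differentiable ℂ (Fext μ h)) ∧
    -- (b) `F_h` agrees with the characteristic function for real `s`
    (∀ (s : ℝ) (h : DualGroup G), Fext μ h (s : ℂ) = charFunRG μ s h) ∧
    -- (c) the maximum-modulus bound on closed discs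
    (∀ r : ℝ, 0 ≤ r → ∀ h : DualGroup G,
      sSup ((fun s => ‖Fext μ h s‖) '' Metric.closedBall (0 : ℂ) r) ≤
        sSup ((fun s => ‖Fext μ (1 : DualGroup G) s‖) ''
          Metric.closedBall (0 : ℂ) r)) := by
  refine ⟨differentiable_Fext hint, fun _ _ ↦ rfl, fun r hr h ↦ ?_⟩
  have hbdd : BddAbove ((fun s ↦ ‖Fext μ 1 s‖) '' Metric.closedBall (0 : ℂ) r) :=
    (isCompact_closedBall 0 r).bddAbove_image
      (differentiable_Fext hint 1).continuous.norm.continuousOn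
  refine csSup_image_le_csSup_image (Metric.nonempty_closedBall.mpr hr) hbdd fun s hs ↦
    ⟨s.im * I, ?_, norm_Fext_le_norm_Fext_one_im_mul_I hint h s⟩
  rw [mem_closedBall_zero_iff] at hs ⊢
  simpa using (abs_im_le_norm s).trans hs

theorem entire_extension_of_charFun_and_max_modulus_bound
    {G : Type*} [AddCommGroup G] [TopologicalSpace G] [IsTopologicalAddGroup G]
    [LocallyCompactSpace G] [SecondCountableTopology G] [T2Space G]
    [MeasurableSpace G] [BorelSpace G]
    (μ : Measure (ℝ × G)) [IsProbabilityMeasure μ]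
    (hint : ∀ c : ℝ, Integrable (fun p : ℝ × G => Real.exp (c * p.1)) μ) :
    -- (a) each `F_h` is an entire function
    (∀ h : DualGroup G, Differentiable ℂ (Fext μ h)) ∧
    -- (b) `F_h` agrees with the characteristic function for real `s`
    (∀ (s : ℝ) (h : DualGroup G), Fext μ h (s : ℂ) = charFunRG μ s h) ∧
    -- (c) the maximum-modulus bound on closed discs
    (∀ r : ℝ, 0 ≤ r → ∀ h : DualGroup G,
      sSup ((fun s => ‖Fext μ h s‖) '' Metric.closedBall (0 : ℂ) r) ≤
        sSup ((fun s => ‖Fext μ (1 : DualGroup G) s‖) ''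
          Metric.closedBall (0 : ℂ) r)) :=
  entire_extension_of_charFun_and_max_modulus_bound_general μ hint

end
end

section
/- Let G be a second countable Hausdorff locally compact abelian group with character group H, and let μ be a probability measure on ℝ × G such that for every c ∈ ℝ the function (t,g) ↦ exp(c·t) is μ-integrable. For h ∈ H and s ∈ ℂ put F_h(s) = ∫ exp(i s t)·h(g) dμ(t,g). Then for every y ∈ ℝ there exists a probability measure ν on ℝ × G such that ν̂(x,h) = F_h(x − i y)/F_0(−i y) for all x ∈ ℝ and all h ∈ H, where F_0 corresponds to the trivial character of G (note F_0(−iy) = ∫ exp(y·t) dμ(t,g) > 0). -/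
open MeasureTheory Complex

noncomputable section

/-! Tilting `μ` by the density `e^{y t} / ∫ e^{y t} dμ` gives a probability measure because
`e^{y t}` is integrable. Since `e^{i (x - i y) t} = e^{y t} e^{i x t}`, the characteristic function
of the tilted measure at `(x, h)` is `F_h(x - i y)` divided by the normalising constant
`∫ e^{y t} dμ = F_1(-i y)`. -/

lemma exp_I_mul_neg_I_mul (y t : ℝ) :
    Complex.exp (Complex.I * -(Complex.I * y) * t) = Real.exp (y * t) := by
  rw [Complex.ofReal_exp]
  congr 1
  push_cast
  linear_combination (-((y : ℂ) * t)) * Complex.I_sq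

lemma exp_I_mul_sub_I_mul (x y t : ℝ) :
    Complex.exp (Complex.I * (x - Complex.I * y) * t) =
      Real.exp (y * t) * Complex.exp (Complex.I * x * t) := by
  rw [← exp_I_mul_neg_I_mul, ← Complex.exp_add]
  ring_nf

section Tilt

variable {G : Type*} [AddCommGroup G] [TopologicalSpace G] [MeasurableSpace G]

lemma Fext_one_neg_I_mul (μ : Measure (ℝ × G)) (y : ℝ) :
    Fext μ 1 (-(Complex.I * y)) = ((∫ p, Real.exp (y * p.1) ∂μ : ℝ) : ℂ) := by
  refine (integral_congr_ae (Filter.Eventually.of_forall fun p => ?_)).trans integral_ofReal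
  change _ * ((1 : Circle) : ℂ) = _
  rw [Circle.coe_one, mul_one, exp_I_mul_neg_I_mul]
  rfl

lemma charFunRG_tilted (μ : Measure (ℝ × G)) (y x : ℝ) (h : DualGroup G) :
    charFunRG (μ.tilted fun p => y * p.1) x h =
      Fext μ h (x - Complex.I * y) / ((∫ p, Real.exp (y * p.1) ∂μ : ℝ) : ℂ) := by
  rw [charFunRG, integral_tilted, Fext, ← integral_div]
  refine integral_congr_ae (Filter.Eventually.of_forall fun p => ?_)
  simp only [Complex.real_smul, exp_I_mul_sub_I_mul]
  push_cast
  ring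

end Tilt

theorem exists_tilted_probability_measure_with_shifted_charFun_general
    {G : Type*} [AddCommGroup G] [TopologicalSpace G]
    [MeasurableSpace G]
    (μ : Measure (ℝ × G)) [IsProbabilityMeasure μ]
    (hint : ∀ c : ℝ, Integrable (fun p : ℝ × G => Real.exp (c * p.1)) μ) :
    ∀ y : ℝ, ∃ ν : Measure (ℝ × G), IsProbabilityMeasure ν ∧
      ∀ (x : ℝ) (h : DualGroup G),
        charFunRG ν x h =
          Fext μ h ((x : ℂ) - Complex.I * (y : ℂ)) /
            Fext μ (1 : DualGroup G) (-(Complex.I * (y : ℂ))) := by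
  intro y
  refine ⟨μ.tilted fun p => y * p.1, isProbabilityMeasure_tilted (hint y), fun x h => ?_⟩
  rw [charFunRG_tilted, Fext_one_neg_I_mul]

theorem exists_tilted_probability_measure_with_shifted_charFun
    {G : Type*} [AddCommGroup G] [TopologicalSpace G] [IsTopologicalAddGroup G]
    [LocallyCompactSpace G] [SecondCountableTopology G] [T2Space G]
    [MeasurableSpace G] [BorelSpace G]
    (μ : Measure (ℝ × G)) [IsProbabilityMeasure μ]
    (hint : ∀ c : ℝ, Integrable (fun p : ℝ × G => Real.exp (c * p.1)) μ) :
    ∀ y : ℝ, ∃ ν : Measure (ℝ × G), IsProbabilityMeasure ν ∧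
      ∀ (x : ℝ) (h : DualGroup G),
        charFunRG ν x h =
          Fext μ h ((x : ℂ) - Complex.I * (y : ℂ)) /
            Fext μ (1 : DualGroup G) (-(Complex.I * (y : ℂ))) :=
  exists_tilted_probability_measure_with_shifted_charFun_general μ hint

end
end

section
/- Let G be an additive subgroup of ℚ, let y₀ ∈ ℚ, and let f : ℚ → ℝ be a function such that Δ_h³ f(y) = 0 for every h ∈ G and every y ∈ y₀ + G, where Δ_h f(y) = f(y+h) − f(y). Then there exist real numbers A, B, C such that f(y) = A·y² + B·y + C for all y ∈ y₀ + G. -/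
/-!
Along a line `y₀ + ℤd` with `d ∈ G` the third differences of `n ↦ f (y₀ + n d)` vanish, so this
sequence is a quadratic in `n`, hence `f` agrees there with a quadratic polynomial `Q_d` in `y`.
Two nonzero `a, g ∈ G` are commensurable, `q g = p a`, so the lines through `y₀` with steps `a`
and `g` share the points `y₀ + k q g`; quadratics agreeing at three points coincide, so every
`Q_g` equals `Q_a`.
-/

/-- The finite difference operator `Δ_h f(y) = f(y+h) − f(y)`. -/
def fdiff (h : ℚ) (f : ℚ → ℝ) : ℚ → ℝ :=
  fun y => f (y + h) - f y

lemma fdiff_fdiff_fdiff_apply (h : ℚ) (f : ℚ → ℝ) (y : ℚ) :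
    fdiff h (fdiff h (fdiff h f)) y = f (y + 3 * h) - 3 * f (y + 2 * h) + 3 * f (y + h) - f y := by
  simp only [fdiff]
  ring_nf

lemma Int.seq_eq_zero_of_third_diff {R : Type*} [CommRing R] {v : ℤ → R}
    (hv : ∀ n, v (n + 3) - 3 * v (n + 2) + 3 * v (n + 1) - v n = 0)
    (h₀ : v 0 = 0) (h₁ : v 1 = 0) (h₂ : v 2 = 0) (n : ℤ) : v n = 0 := by
  let P : ℤ → Prop := fun n => v n = 0 ∧ v (n + 1) = 0 ∧ v (n + 2) = 0
  have step : ∀ n, P n ↔ P (n + 1) := by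
    intro n
    have := hv n
    simp only [P, add_assoc, one_add_one_eq_two, show (1 : ℤ) + 2 = 3 by norm_num]
    constructor
    · rintro ⟨h0, h1, h2⟩
      exact ⟨h1, h2, by linear_combination this + 3 * h2 - 3 * h1 + h0⟩
    · rintro ⟨h1, h2, h3⟩
      exact ⟨by linear_combination -this + h3 - 3 * h2 + 3 * h1, h1, h2⟩
  have hP : ∀ n, P n := by
    intro n
    induction n using Int.induction_on with
    | zero => exact ⟨h₀, h₁, h₂⟩
    | succ i ih => exact (step i).1 ih
    | pred i ih => exact (step _).2 (by rwa [sub_add_cancel])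
  exact (hP n).1

lemma Int.exists_quadratic_of_third_diff {K : Type*} [Field K] [CharZero K] {u : ℤ → K}
    (hu : ∀ n, u (n + 3) - 3 * u (n + 2) + 3 * u (n + 1) - u n = 0) :
    ∃ α β γ : K, ∀ n : ℤ, u n = α * n ^ 2 + β * n + γ := by
  set α := (u 2 - 2 * u 1 + u 0) / 2
  refine ⟨α, u 1 - u 0 - α, u 0, fun n => ?_⟩
  exact sub_eq_zero.1 (Int.seq_eq_zero_of_third_diff
    (v := fun n : ℤ => u n - (α * n ^ 2 + (u 1 - u 0 - α) * n + u 0))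
    (fun n => by push_cast; linear_combination hu n) (by simp) (by simp)
    (by simp only [Int.cast_ofNat, α]; ring) n)

lemma exists_quadratic_eq_quadratic_comp_affine {K : Type*} [Field K] (α β γ x₀ d : K)
    (hd : d ≠ 0) :
    ∃ A B C : K, ∀ t, α * t ^ 2 + β * t + γ = A * (x₀ + t * d) ^ 2 + B * (x₀ + t * d) + C :=
  ⟨α / d ^ 2, β / d - 2 * α * x₀ / d ^ 2, γ - β * x₀ / d + α * x₀ ^ 2 / d ^ 2, fun t => by
    field_simp; ring⟩

lemma quadratic_coeffs_eq_of_eq_at_three {K : Type*} [Field K] {A B C A' B' C' x y z : K}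
    (hxy : x ≠ y) (hxz : x ≠ z) (hyz : y ≠ z)
    (hx : A * x ^ 2 + B * x + C = A' * x ^ 2 + B' * x + C')
    (hy : A * y ^ 2 + B * y + C = A' * y ^ 2 + B' * y + C')
    (hz : A * z ^ 2 + B * z + C = A' * z ^ 2 + B' * z + C') :
    A = A' ∧ B = B' ∧ C = C' := by
  have hxy' : (A - A') * (x + y) + (B - B') = 0 :=
    (mul_eq_zero.1 (by linear_combination hx - hy : (x - y) * _ = 0)).resolve_left
      (sub_ne_zero.2 hxy)
  have hxz' : (A - A') * (x + z) + (B - B') = 0 :=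
    (mul_eq_zero.1 (by linear_combination hx - hz : (x - z) * _ = 0)).resolve_left
      (sub_ne_zero.2 hxz)
  have hA : A - A' = 0 :=
    (mul_eq_zero.1 (by linear_combination hxy' - hxz' : (A - A') * (y - z) = 0)).resolve_right
      (sub_ne_zero.2 hyz)
  have hB : B - B' = 0 := by linear_combination hxy' - (x + y) * hA
  refine ⟨sub_eq_zero.1 hA, sub_eq_zero.1 hB, ?_⟩
  linear_combination hx - x ^ 2 * hA - x * hB

lemma Rat.exists_int_mul_eq_int_mul {a : ℚ} (ha : a ≠ 0) (b : ℚ) :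
    ∃ p q : ℤ, q ≠ 0 ∧ (q : ℚ) * b = p * a :=
  ⟨(b / a).num, (b / a).den, by simp, by
    rw [Int.cast_natCast, ← Rat.mul_den_eq_num]; field_simp⟩

open AddSubgroup in
lemma exists_quadratic_on_zmultiples_coset {f : ℚ → ℝ} {y₀ d : ℚ} (hd : d ≠ 0)
    (hf : ∀ x, x - y₀ ∈ zmultiples d → fdiff d (fdiff d (fdiff d f)) x = 0) :
    ∃ A B C : ℝ, ∀ x, x - y₀ ∈ zmultiples d → f x = A * (x : ℝ) ^ 2 + B * x + C := by
  have hmem (n : ℤ) : y₀ + n * d - y₀ ∈ zmultiples d := ⟨n, by simp⟩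
  obtain ⟨α, β, γ, hu⟩ := Int.exists_quadratic_of_third_diff (u := fun n : ℤ => f (y₀ + n * d))
    fun n => by
      have := hf _ (hmem n)
      rw [fdiff_fdiff_fdiff_apply] at this
      push_cast
      linear_combination (norm := ring_nf) this
  obtain ⟨A, B, C, hABC⟩ :=
    exists_quadratic_eq_quadratic_comp_affine α β γ (y₀ : ℝ) d (by exact_mod_cast hd)
  refine ⟨A, B, C, fun x hx => ?_⟩
  obtain ⟨n, hn⟩ := mem_zmultiples_iff.1 hx
  obtain rfl : x = y₀ + n * d := by rw [zsmul_eq_mul] at hn; linarith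
  rw [hu, hABC]
  push_cast
  ring

theorem quadratic_on_coset_of_third_difference_vanishing
    (G : AddSubgroup ℚ) (y₀ : ℚ) (f : ℚ → ℝ)
    (hf : ∀ h ∈ G, ∀ g ∈ G, fdiff h (fdiff h (fdiff h f)) (y₀ + g) = 0) :
    ∃ A B C : ℝ, ∀ g ∈ G,
      f (y₀ + g) = A * ((y₀ + g : ℚ) : ℝ) ^ 2 + B * ((y₀ + g : ℚ) : ℝ) + C := by
  have line : ∀ d ∈ G, d ≠ 0 → ∃ A B C : ℝ, ∀ x, x - y₀ ∈ AddSubgroup.zmultiples d →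
      f x = A * (x : ℝ) ^ 2 + B * x + C := fun d hd hd0 =>
    exists_quadratic_on_zmultiples_coset hd0 fun x hx => by
      simpa using hf d hd _ (AddSubgroup.zmultiples_le_of_mem hd hx)
  obtain rfl | ⟨a, haG, ha0⟩ := G.bot_or_exists_ne_zero
  · exact ⟨0, 0, f y₀, by simp⟩
  obtain ⟨A, B, C, hA⟩ := line a haG ha0
  refine ⟨A, B, C, fun g hg => ?_⟩
  obtain rfl | hg0 := eq_or_ne g 0
  · exact hA _ (by simp)
  obtain ⟨A', B', C', hA'⟩ := line g hg hg0
  obtain ⟨p, q, hq0, hqp⟩ := Rat.exists_int_mul_eq_int_mul ha0 g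
  have mem : ∀ (k m : ℤ) (b : ℚ), y₀ + k * (m * b) - y₀ ∈ AddSubgroup.zmultiples b :=
    fun k m b => ⟨k * m, by simp only [zsmul_eq_mul, Int.cast_mul, add_sub_cancel_left]; ring⟩
  have agree : ∀ k : ℤ, let x : ℝ := (y₀ + k * (q * g) : ℚ)
      A' * x ^ 2 + B' * x + C' = A * x ^ 2 + B * x + C := fun k =>
    (hA' _ (mem k q g)).symm.trans (hA _ (hqp ▸ mem k p a))
  have distinct : ∀ i j : ℤ, i ≠ j →
      ((y₀ + i * (q * g) : ℚ) : ℝ) ≠ ((y₀ + j * (q * g) : ℚ) : ℝ) := by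
    intro i j hij
    simp [hij, hq0, hg0]
  obtain ⟨rfl, rfl, rfl⟩ := quadratic_coeffs_eq_of_eq_at_three (distinct 0 1 (by decide))
    (distinct 0 2 (by decide)) (distinct 1 2 (by decide)) (agree 0) (agree 1) (agree 2)
  exact hA' _ (by simp)
end
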